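/- Let I be a common independent set of M and N and let x ∈ E ∖ span_N(I) be such that there is no augmenting path for I starting at x. Then E(x,I) ⊆ span_M(I ∩ E(x,I)). -/

import Mathlib

open Set Matroid
open scoped symmDiff

namespace AZ

variable {α : Type*}

/-- The contraction `M / X`, defined (in the standard way) as the dual of the
restriction of the dual to the complement of `X`. -/
def con (M : Matroid α) (X : Set α) : Matroid α := (M✶ ↾ (M.E \ X))✶

/-- The deletion `M − X := M ↾ (E ∖ X)`. -/
def del (M : Matroid α) (X : Set α) : Matroid α := M ↾ (M.E \ X)

/-- The matroidal Hall condition `Hall(M,N)`: for every `X ⊆ E` such that `M ↾ X` has a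
base that is independent in `N.X = N/(E∖X)`, also `N.X` has a base independent in `M ↾ X`. -/
def Hall (M N : Matroid α) : Prop :=
  ∀ X ⊆ N.E,
    (∃ B, (M ↾ X).IsBase B ∧ (con N (N.E \ X)).Indep B) →
    ∃ B, (con N (N.E \ X)).IsBase B ∧ (M ↾ X).Indep B

/-- `(M,N)` is finitely matchable: every finite `F ⊆ E` is `N`-spanned by an
`M`-independent set. -/
def FinitelyMatchable (M N : Matroid α) : Prop :=
  ∀ F ⊆ M.E, F.Finite → ∃ I, M.Indep I ∧ F ⊆ N.closure I

/-- `G ⊆ E` is `(M,N)`-negligible: for all finite `X ⊆ G` and finite `Y ⊆ E ∖ G` there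
is an `M/Y`-independent set that `N`-spans `X`. -/
def Negligible (M N : Matroid α) (G : Set α) : Prop :=
  G ⊆ M.E ∧
    ∀ X ⊆ G, X.Finite → ∀ Y ⊆ M.E \ G, Y.Finite →
      ∃ I, (con M Y).Indep I ∧ X ⊆ N.closure I

/-- A common independent set `I` of `M` and `N` is `(M,N)`-stable if every `J ⊆ E ∖ I`
that is independent in `M/I` and in `N` is also independent in `N/I`. -/
def Stable (M N : Matroid α) (I : Set α) : Prop :=
  M.Indep I ∧ N.Indep I ∧
    ∀ J ⊆ M.E \ I, (con M I).Indep J → N.Indep J → (con N I).Indep J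

/-- A circuit of a matroid: a minimal dependent subset of the ground set. -/
def Circuit (M : Matroid α) (C : Set α) : Prop :=
  C ⊆ M.E ∧ ¬ M.Indep C ∧ ∀ D ⊂ C, M.Indep D

/-- The arc relation of the exchange digraph `D(I)`: for `x ∈ E ∖ I` and `y ∈ I` there is
an arc `x → y` if `x ∈ span_M(I)` and `y` lies in the unique `M`-circuit contained in
`I + x`, and an arc `y → x` if `x ∈ span_N(I)` and `y` lies in the unique `N`-circuit
contained in `I + x`. -/
def Arc (M N : Matroid α) (I : Set α) (x y : α) : Prop :=
  (x ∈ M.E \ I ∧ y ∈ I ∧ x ∈ M.closure I ∧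
    ∃ C, Circuit M C ∧ C ⊆ insert x I ∧ x ∈ C ∧ y ∈ C) ∨
  (x ∈ I ∧ y ∈ M.E \ I ∧ y ∈ N.closure I ∧
    ∃ C, Circuit N C ∧ C ⊆ insert y I ∧ y ∈ C ∧ x ∈ C)

/-- `Reach M N I x` is `E(x,I)`: the set of elements reachable from `x` by a directed
path in `D(I)`. -/
def Reach (M N : Matroid α) (I : Set α) (x : α) : Set α :=
  {y | Relation.ReflTransGen (Arc M N I) x y}

/-- `P = {f 0, …, f (2n)}` is an `xy`-augmenting path for `I`: it starts at
`x = f 0 ∉ span_N(I)`, ends at `y = f (2n) ∉ span_M(I)`, consecutive elements are joined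
by arcs of `D(I)`, and there are no jumping arcs. -/
def IsAugPath (M N : Matroid α) (I P : Set α) (x y : α) : Prop :=
  ∃ (n : ℕ) (f : ℕ → α),
    P = f '' Set.Iic (2 * n) ∧ P ⊆ M.E ∧ Set.InjOn f (Set.Iic (2 * n)) ∧
    f 0 = x ∧ f (2 * n) = y ∧
    x ∉ N.closure I ∧ y ∉ M.closure I ∧
    (∀ i < 2 * n, Arc M N I (f i) (f (i + 1))) ∧
    (∀ i j, i + 1 < j → j ≤ 2 * n → ¬ Arc M N I (f i) (f j))

/-- One augmentation step: `J = I △ P` for some augmenting path `P` for `I`. -/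
def AugStep (M N : Matroid α) (I J : Set α) : Prop :=
  ∃ P x y, IsAugPath M N I P x y ∧ J = I ∆ P

/-- `J ∈ A(I)`: `J` is obtained from `I` by finitely many successive augmentations. -/
def MemA (M N : Matroid α) (I J : Set α) : Prop :=
  Relation.ReflTransGen (AugStep M N) I J

/-- `O = {f 0, …, f (2n+1)}` is a switching cycle for `I`: the arcs of `D(I)` inside `O`
are exactly the arcs `f i → f (i+1 mod 2n+2)`, forming a chordless directed cycle. -/
def SwitchCycle (M N : Matroid α) (I O : Set α) : Prop :=
  ∃ (n : ℕ) (f : ℕ → α),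
    O = f '' Set.Iio (2 * n + 2) ∧ O ⊆ M.E ∧ Set.InjOn f (Set.Iio (2 * n + 2)) ∧
    ∀ i < 2 * n + 2, ∀ j < 2 * n + 2,
      (Arc M N I (f i) (f j) ↔ j = (i + 1) % (2 * n + 2))

/-- The preorder on finite common independent sets: `I ⊴ J` iff
`I ⊆ span_M(J) ∩ span_N(J)`. -/
def Le (M N : Matroid α) (I J : Set α) : Prop :=
  I ⊆ M.closure J ∩ N.closure J

/-- The equivalence relation: `I ∼ J` iff `I ⊴ J` and `J ⊴ I`. -/
def Sim (M N : Matroid α) (I J : Set α) : Prop :=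
  Le M N I J ∧ Le M N J I

/-- A family of finite common independent sets of `M` and `N` that is closed under `∼`
and is `⊴`-directed. -/
def DirFam (M N : Matroid α) (D : Set (Set α)) : Prop :=
  (∀ I ∈ D, I.Finite ∧ M.Indep I ∧ N.Indep I) ∧
  (∀ I ∈ D, ∀ J, J.Finite → M.Indep J → N.Indep J → Sim M N I J → J ∈ D) ∧
  (∀ I ∈ D, ∀ J ∈ D, ∃ K ∈ D, Le M N I K ∧ Le M N J K)

/-- A maximal directed family of finite common independent sets. -/
def MaxDirFam (M N : Matroid α) (D : Set (Set α)) : Prop :=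
  DirFam M N D ∧ ∀ D', DirFam M N D' → D ⊆ D' → D' = D

/-
Take `z ∈ E(x,I)`. If `z ∉ span_M(I)`, a shortest `x`–`z` path in `D(I)` has no chords and no
repeated vertices, and since arcs alternate between `E ∖ I` and `I` it has even length: it is
an augmenting path starting at `x`. So `z ∈ span_M(I)`, and then either `z ∈ I`, or each `y` in
`C_M(z,I) - z` is the head of an arc `z → y`, hence lies in `I ∩ E(x,I)`, and `z` is spanned
by `C_M(z,I) - z`.
-/

section Walk

variable {β : Type*} {r : β → β → Prop} {f : ℕ → β} {n : ℕ}

def IsWalk (r : β → β → Prop) (f : ℕ → β) (n : ℕ) : Prop :=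
  ∀ i < n, r (f i) (f (i + 1))

lemma IsWalk.mono {m : ℕ} (hf : IsWalk r f n) (hmn : m ≤ n) : IsWalk r f m :=
  fun i hi => hf i (by omega)

lemma exists_isWalk_of_reflTransGen {x z : β} (h : Relation.ReflTransGen r x z) :
    ∃ n f, f 0 = x ∧ f n = z ∧ IsWalk r f n := by
  induction h with
  | refl => exact ⟨0, fun _ => x, rfl, rfl, fun i hi => absurd hi (Nat.not_lt_zero i)⟩
  | @tail b c _ hbc ih =>
    obtain ⟨n, f, h0, hn, hf⟩ := ih
    refine ⟨n + 1, fun k => if k ≤ n then f k else c, by simp [h0], by simp, fun i hi => ?_⟩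
    rcases Nat.lt_or_ge i n with hlt | hge
    · simpa [hlt.le, Nat.succ_le_of_lt hlt] using hf i hlt
    · obtain rfl : i = n := by omega
      simpa [hn] using hbc

/-- Skipping the vertices strictly between `f i` and `f (i + d + 1)`, given an edge between them. -/
lemma IsWalk.splice (hf : IsWalk r f n) {i d : ℕ} (hid : i + d < n)
    (hbridge : r (f i) (f (i + d + 1))) :
    IsWalk r (fun k => if k ≤ i then f k else f (k + d)) (n - d) := by
  intro k hk
  rcases Nat.lt_trichotomy k i with hlt | rfl | hgt
  · simpa [hlt.le, Nat.succ_le_of_lt hlt] using hf k (by omega)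
  · simpa [Nat.add_right_comm k 1 d] using hbridge
  · simp only [if_neg (by omega : ¬ k ≤ i), if_neg (by omega : ¬ k + 1 ≤ i),
      Nat.add_right_comm k 1 d]
    exact hf (k + d) (by omega)

/-- A shortest walk has neither chords nor repeated vertices. -/
lemma exists_chordless_walk {x z : β} (h : Relation.ReflTransGen r x z) :
    ∃ n f, f 0 = x ∧ f n = z ∧ IsWalk r f n ∧ Set.InjOn f (Set.Iic n) ∧
      ∀ i j, i + 1 < j → j ≤ n → ¬ r (f i) (f j) := by
  classical
  have hex := exists_isWalk_of_reflTransGen h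
  obtain ⟨f, h0, hn, hf⟩ := Nat.find_spec hex
  set n := Nat.find hex
  have hshorter : ∀ {i d}, i + d < n → 0 < d → ¬ r (f i) (f (i + d + 1)) := by
    intro i d hid hd hr
    refine Nat.find_min hex (m := n - d) (by omega)
      ⟨_, by simp [h0], ?_, hf.splice hid hr⟩
    simp only [if_neg (by omega : ¬ n - d ≤ i), Nat.sub_add_cancel (by omega : d ≤ n), hn]
  refine ⟨n, f, h0, hn, hf, ?_, fun i j hij hjn hr => ?_⟩
  · intro i hi j hj hfij
    by_contra hne
    wlog hij : i < j generalizing i j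
    · exact this hj hi hfij.symm (Ne.symm hne) (by omega)
    rcases Nat.lt_or_ge j n with hjn | hjn
    · exact hshorter (i := i) (d := j - i) (by omega) (by omega)
        (by rw [hfij, (by omega : i + (j - i) + 1 = j + 1)]; exact hf j hjn)
    · have hjn : j = n := le_antisymm (Set.mem_Iic.1 hj) hjn
      exact Nat.find_min hex (m := i) (by omega)
        ⟨f, h0, by rw [hfij, hjn, hn], hf.mono (by omega)⟩
  · exact hshorter (i := i) (d := j - i - 1) (by omega) (by omega)
      (by rwa [(by omega : i + (j - i - 1) + 1 = j)])

end Walk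

variable {M N : Matroid α} {I : Set α} {x y z : α}

lemma circuit_of_isCircuit {C : Set α} (hC : M.IsCircuit C) : Circuit M C :=
  ⟨hC.subset_ground, hC.not_indep, fun _ hD => hC.ssubset_indep hD⟩

lemma arc_mem_ground (hIE : I ⊆ M.E) (h : Arc M N I x y) : y ∈ M.E := by
  rcases h with ⟨-, hy, -⟩ | ⟨-, hy, -⟩
  exacts [hIE hy, hy.1]

lemma arc_mem_iff_notMem (h : Arc M N I x y) : x ∈ I ↔ y ∉ I := by
  rcases h with ⟨hx, hy, -⟩ | ⟨hx, hy, -⟩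
  exacts [iff_of_false hx.2 (not_not_intro hy), iff_of_true hx hy.2]

lemma arc_of_mem_fundCircuit (hI : M.Indep I) (hz : z ∈ M.closure I) (hzI : z ∉ I)
    (hy : y ∈ M.fundCircuit z I) (hyz : y ≠ z) : Arc M N I z y :=
  Or.inl ⟨⟨M.closure_subset_ground I hz, hzI⟩,
    (M.fundCircuit_subset_insert z I hy).resolve_left hyz, hz, M.fundCircuit z I,
    circuit_of_isCircuit (hI.fundCircuit_isCircuit hz hzI), M.fundCircuit_subset_insert z I,
    M.mem_fundCircuit z I, hy⟩

lemma IsWalk.mem_iff_odd {f : ℕ → α} {n : ℕ} (hf : IsWalk (Arc M N I) f n) (h0 : f 0 ∉ I) :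
    ∀ i ≤ n, (f i ∈ I ↔ Odd i) := by
  intro i
  induction i with
  | zero => simpa using h0
  | succ i ih =>
    intro hi
    rw [Nat.odd_add_one, ← ih (by omega), arc_mem_iff_notMem (hf i (by omega)), not_not]

lemma exists_isAugPath (hIM : M.Indep I) (hIN : N.Indep I) (hx : x ∈ M.E \ N.closure I)
    (hz : Relation.ReflTransGen (Arc M N I) x z) (hzI : z ∉ I) (hzcl : z ∉ M.closure I) :
    ∃ P, IsAugPath M N I P x z := by
  obtain ⟨n, f, h0, hn, hf, hinj, hchord⟩ := exists_chordless_walk hz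
  have hxI : x ∉ I := fun h => hx.2 (N.subset_closure I hIN.subset_ground h)
  have hparity := hf.mem_iff_odd (h0 ▸ hxI)
  obtain ⟨k, rfl⟩ : 2 ∣ n := by
    rw [← even_iff_two_dvd, ← Nat.not_odd_iff_even, ← hparity n le_rfl, hn]
    exact hzI
  refine ⟨_, k, f, rfl, ?_, hinj, h0, hn, hx.2, hzcl, hf, hchord⟩
  rintro _ ⟨i, hi, rfl⟩
  cases i with
  | zero => exact h0 ▸ hx.1
  | succ i => exact arc_mem_ground hIM.subset_ground (hf i (Set.mem_Iic.1 hi))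

theorem statement19_general (M N : Matroid α)
    (I : Set α) (hIM : M.Indep I) (hIN : N.Indep I)
    (x : α) (hx : x ∈ M.E \ N.closure I)
    (hnoaug : ¬ ∃ P y, IsAugPath M N I P x y) :
    Reach M N I x ⊆ M.closure (I ∩ Reach M N I x) := by
  intro z hz
  by_cases hzI : z ∈ I
  · exact M.subset_closure _ (inter_subset_left.trans hIM.subset_ground) ⟨hzI, hz⟩
  have hzcl : z ∈ M.closure I := by
    by_contra hzcl
    obtain ⟨P, hP⟩ := exists_isAugPath hIM hIN hx hz hzI hzcl
    exact hnoaug ⟨P, z, hP⟩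
  have hC := hIM.fundCircuit_isCircuit hzcl hzI
  refine M.closure_subset_closure ?_
    (hC.mem_closure_sdiff_singleton_of_mem (M.mem_fundCircuit z I))
  rintro y ⟨hyC, hyz⟩
  exact ⟨(M.fundCircuit_subset_insert z I hyC).resolve_left hyz,
    hz.tail (arc_of_mem_fundCircuit hIM hzcl hzI hyC hyz)⟩

/-- If `I` is a common independent set, `x ∈ E ∖ span_N(I)`, and there is no augmenting
path for `I` starting at `x`, then `E(x,I) ⊆ span_M(I ∩ E(x,I))`. -/
theorem statement19 (M N : Matroid α) [M.Finitary] [N.Finitary] (hE : M.E = N.E)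
    (I : Set α) (hIM : M.Indep I) (hIN : N.Indep I)
    (x : α) (hx : x ∈ M.E \ N.closure I)
    (hnoaug : ¬ ∃ P y, IsAugPath M N I P x y) :
    Reach M N I x ⊆ M.closure (I ∩ Reach M N I x) :=
  statement19_general M N I hIM hIN x hx hnoaug

end AZ
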